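/- In K(x,y): (i) if f is a K-linear combination of the monomials y, x·y, x²·y, x·(x·y) and ∂_x(f) = ∂_y(f) = 0, then f = 0 (there is no train Peirce-evanescent identity of degree (2,1)); (ii) for every n ≥ 3 and every commutative nonassociative monomial w of bidegree (n,1) in (x,y) with w ≠ x^n·y and w ≠ x^{{n}}y, there exists a unique element P_w of the K-linear span of {x^k·y : 2 ≤ k ≤ n} ∪ {x^{{r}}y : 1 ≤ r ≤ n} such that ε(P_w) = 1 and ∂_x(w − P_w) = ∂_y(w − P_w) = 0; consequently w − P_w is a Peirce-evanescent identity. -/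

import Mathlib

namespace Evanescent

universe u v

variable {T : Type u}

/-- The commutativity relation on the free magma on `T`. -/
inductive CommRel (T : Type u) : FreeMagma T → FreeMagma T → Prop
  | comm (a b : FreeMagma T) : CommRel T (a * b) (b * a)
  | mul_left {a b : FreeMagma T} (c : FreeMagma T) :
      CommRel T a b → CommRel T (a * c) (b * c)
  | mul_right (c : FreeMagma T) {a b : FreeMagma T} :
      CommRel T a b → CommRel T (c * a) (c * b)

/-- The free commutative magma on `T`: the set of commutative nonassociative
monomials (words) in the variables `T`. -/
def FreeCommMagma (T : Type u) : Type u := Quot (CommRel T)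

namespace FreeCommMagma

instance : Mul (FreeCommMagma T) :=
  ⟨Quot.map₂ (· * ·) (fun a _ _ h => CommRel.mul_right a h)
    (fun _ _ b h => CommRel.mul_left b h)⟩

/-- The class of a nonassociative word in the free commutative magma. -/
def mk (w : FreeMagma T) : FreeCommMagma T := Quot.mk (CommRel T) w

/-- The generator of the free commutative magma corresponding to a variable. -/
def of (t : T) : FreeCommMagma T := mk (FreeMagma.of t)

@[simp] lemma mk_mul (a b : FreeMagma T) : mk a * mk b = mk (a * b) := rfl

protected lemma mul_comm (a b : FreeCommMagma T) : a * b = b * a := by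
  induction a using Quot.ind
  induction b using Quot.ind
  exact Quot.sound (CommRel.comm _ _)

instance : CommMagma (FreeCommMagma T) := ⟨FreeCommMagma.mul_comm⟩

end FreeCommMagma

section Peirce

variable (R : Type v) [Semiring R] [DecidableEq T]

/-- The Peirce polynomial of a (noncommutative) nonassociative word, with
coefficients in `R`. -/
noncomputable def peirceAux (i : T) : FreeMagma T → Polynomial R
  | .of j => if j = i then 1 else 0
  | .mul u v => Polynomial.X * (peirceAux i u + peirceAux i v)

@[simp] lemma peirceAux_mul (i : T) (u v : FreeMagma T) :
    peirceAux R i (u * v) = Polynomial.X * (peirceAux R i u + peirceAux R i v) := rfl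

@[simp] lemma peirceAux_of (i j : T) :
    peirceAux R i (FreeMagma.of j) = if j = i then 1 else 0 := rfl

/-- The number of occurrences of the variable `i` in a nonassociative word. -/
def countAux (i : T) : FreeMagma T → ℕ
  | .of j => if j = i then 1 else 0
  | .mul u v => countAux i u + countAux i v

@[simp] lemma countAux_mul (i : T) (u v : FreeMagma T) :
    countAux i (u * v) = countAux i u + countAux i v := rfl

lemma peirceAux_respects (i : T) {a b : FreeMagma T} (h : CommRel T a b) :
    peirceAux R i a = peirceAux R i b := by
  induction h with
  | comm a b => simp [add_comm]
  | mul_left c h ih => simp [ih]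
  | mul_right c h ih => simp [ih]

lemma countAux_respects (i : T) {a b : FreeMagma T} (h : CommRel T a b) :
    countAux i a = countAux i b := by
  induction h with
  | comm a b => simp [Nat.add_comm]
  | mul_left c h ih => simp [ih]
  | mul_right c h ih => simp [ih]

/-- The Peirce polynomial `∂ᵢ(w)` of a commutative nonassociative monomial `w`,
determined by `∂ᵢ(tᵢ) = 1`, `∂ᵢ(tⱼ) = 0` for `j ≠ i`, and
`∂ᵢ(u·v) = X·(∂ᵢ(u) + ∂ᵢ(v))`. -/
noncomputable def FreeCommMagma.peirce (i : T) : FreeCommMagma T → Polynomial R :=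
  Quot.lift (peirceAux R i) fun _ _ h => peirceAux_respects R i h

/-- The number of occurrences (degree) of the variable `i` in a commutative
nonassociative monomial. -/
def FreeCommMagma.count (i : T) : FreeCommMagma T → ℕ :=
  Quot.lift (countAux i) fun _ _ h => countAux_respects i h

end Peirce

/-- Principal powers of an element of a magma: `ppow a n = a^(n+1)`,
i.e. `ppow a 0 = a` and `ppow a (n+1) = a * (ppow a n)`. -/
def ppow {M : Type v} [Mul M] (a : M) : ℕ → M
  | 0 => a
  | n + 1 => a * ppow a n

/-- Iterated left multiplication: `lpow a r g = a^{{r}} g`, i.e. `lpow a 0 g = g` and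
`lpow a (r+1) g = a * (lpow a r g)`. -/
def lpow {M : Type v} [Mul M] (a : M) : ℕ → M → M
  | 0, g => g
  | r + 1, g => a * lpow a r g

section Algebra

variable (K : Type v) [Field K]

/-- A commutative nonassociative monomial, viewed as an element of the free
commutative nonassociative algebra `K(T)` (realized as the magma algebra of the
free commutative magma). -/
noncomputable def mono (w : FreeCommMagma T) : MonoidAlgebra K (FreeCommMagma T) :=
  MonoidAlgebra.single w 1

/-- The augmentation (sum of the coefficients) of an element of the free
commutative nonassociative algebra. -/
noncomputable def aug : MonoidAlgebra K (FreeCommMagma T) →ₗ[K] K :=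
  Finsupp.lsum K (fun _ => LinearMap.id) ∘ₗ (MonoidAlgebra.coeffLinearEquiv K).toLinearMap

/-- The Peirce polynomial `∂ᵢ : K(T) → K[X]`, the `K`-linear map determined on
monomials by `∂ᵢ(tᵢ) = 1`, `∂ᵢ(tⱼ) = 0` for `j ≠ i`, and `∂ᵢ(u·v) = X·(∂ᵢ(u) + ∂ᵢ(v))`. -/
noncomputable def Dp [DecidableEq T] (i : T) :
    MonoidAlgebra K (FreeCommMagma T) →ₗ[K] Polynomial K :=
  Finsupp.lsum K (fun w => LinearMap.toSpanSingleton K (Polynomial K)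
    (FreeCommMagma.peirce K i w)) ∘ₗ (MonoidAlgebra.coeffLinearEquiv K).toLinearMap

/-- The free commutative nonassociative algebra is commutative. -/
lemma fca_mul_comm (f g : MonoidAlgebra K (FreeCommMagma T)) : f * g = g * f := by
  rw [MonoidAlgebra.mul_def, MonoidAlgebra.mul_def, Finsupp.sum_comm]
  refine Finsupp.sum_congr fun a _ => Finsupp.sum_congr fun c _ => ?_
  rw [FreeCommMagma.mul_comm, mul_comm (f.coeff c) (g.coeff a)]

end Algebra

section Subst

variable (K : Type v) [Field K] {A : Type*} [Mul A]

/-- Evaluation of a nonassociative word under a substitution of the variables. -/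
def evalAux (ρ : T → A) : FreeMagma T → A
  | .of t => ρ t
  | .mul u v => evalAux ρ u * evalAux ρ v

@[simp] lemma evalAux_mul (ρ : T → A) (u v : FreeMagma T) :
    evalAux ρ (u * v) = evalAux ρ u * evalAux ρ v := rfl

/-- Evaluation of a commutative nonassociative monomial in a commutative magma
under a substitution of the variables. -/
def FreeCommMagma.eval (hA : ∀ a b : A, a * b = b * a) (ρ : T → A) :
    FreeCommMagma T → A :=
  Quot.lift (evalAux ρ) (by
    intro a b h
    induction h with
    | comm a b => exact hA _ _
    | mul_left c h ih => simp [ih]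
    | mul_right c h ih => simp [ih])

/-- The substitution homomorphism `ρ̂ : K(T) → A` extending a substitution
`ρ : T → A` of the variables, for `A` a commutative nonassociative `K`-algebra. -/
noncomputable def subst [AddCommMonoid A] [Module K A]
    (hA : ∀ a b : A, a * b = b * a) (ρ : T → A)
    (f : MonoidAlgebra K (FreeCommMagma T)) : A :=
  f.coeff.sum fun w c => c • FreeCommMagma.eval hA ρ w

end Subst

/-- The list of the leaves of a nonassociative word (a rooted binary tree with
leaves labeled by the variables), together with their heights. -/
def leaves : FreeMagma T → List (T × ℕ)
  | .of t => [(t, 0)]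
  | .mul u v => (leaves u ++ leaves v).map fun p => (p.1, p.2 + 1)

end Evanescent
namespace Evanescent

/-- The variable `x` of `K(x,y)`. -/
def x2 : FreeCommMagma (Fin 2) := FreeCommMagma.of 0

/-- The variable `y` of `K(x,y)`. -/
def y2 : FreeCommMagma (Fin 2) := FreeCommMagma.of 1

/-- The span of `{x^k·y : 2 ≤ k ≤ n} ∪ {x^{{r}}y : 1 ≤ r ≤ n}` in `K(x,y)`
(`ppow x2 k = x^(k+1)`, `lpow x2 r y2 = x^{{r}}y`). -/
noncomputable def trainSpan1 (K : Type*) [Field K] (n : ℕ) :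
    Submodule K (MonoidAlgebra K (FreeCommMagma (Fin 2))) :=
  Submodule.span K
    (((fun k => mono K (ppow x2 k * y2)) '' Set.Icc 1 (n - 1)) ∪
     ((fun r => mono K (lpow x2 r y2)) '' Set.Icc 1 n))

end Evanescent

/-!
Together, the augmentation and the Peirce polynomials form a linear map `peirceData` with
`ε(f·g) = ε(f)ε(g)` and `∂(f·g) = X·(ε(g)∂f + ε(f)∂g)`. Hence on elements of augmentation one
the data of a product only depends on the data of the factors, and is affine in each of them:
`f·g - f·h - k·g + k·h` and `x·(a·y) - (x·a)·y + (x·x)·y - x·(x·y)` are evanescent.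

Existence of `P_w`: write `w = u·v` with `y` in `u` and `v` a monomial in `x` alone. By induction,
`v` has the data of a combination `Q` of principal powers of `x`, and `u` that of a train element
`P_u`. The first identity replaces `u·v` by `x·P_u + y·Q - y·x`, and the second rewrites
`x·(xᵏ·y)` as `xᵏ⁺¹·y - x²·y + x·(x·y)`, so everything stays in the train span.

Uniqueness: the coefficient of `Xⁿ` in `∂_y` on the train span of degree `n` only sees
`x^{{n}}y`, and that in `∂_x` sees `x^{{n}}y` once and `xⁿ·y` twice; since `2 ≠ 0`, a train
element with vanishing Peirce polynomials is zero.
-/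

namespace Evanescent

open Polynomial

namespace FreeCommMagma

variable {T : Type*}

@[elab_as_elim]
lemma induction_on {motive : FreeCommMagma T → Prop} (w : FreeCommMagma T)
    (of : ∀ t, motive (of t)) (mul : ∀ u v, motive u → motive v → motive (u * v)) :
    motive w := by
  induction w using Quot.ind with | mk a => ?_
  induction a using FreeMagma.recOnMul with
  | ih1 t => exact of t
  | ih2 u v hu hv => exact mul _ _ hu hv

variable [DecidableEq T]

@[simp] lemma peirce_of (R : Type*) [Semiring R] (i j : T) :
    peirce R i (of j) = if j = i then 1 else 0 := rfl

@[simp] lemma peirce_mul (R : Type*) [Semiring R] (i : T) (u v : FreeCommMagma T) :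
    peirce R i (u * v) = X * (peirce R i u + peirce R i v) := by
  induction u using Quot.ind
  induction v using Quot.ind
  rfl

@[simp] lemma count_of (i j : T) : count i (of j) = if j = i then 1 else 0 := rfl

@[simp] lemma count_mul (i : T) (u v : FreeCommMagma T) :
    count i (u * v) = count i u + count i v := by
  induction u using Quot.ind
  induction v using Quot.ind
  rfl

variable [Fintype T]

lemma sum_count_pos (w : FreeCommMagma T) : 0 < ∑ t, count t w := by
  induction w using induction_on with
  | of j => simp
  | mul u v hu hv => simp only [count_mul, Finset.sum_add_distrib]; omega

lemma natDegree_peirce_lt (R : Type*) [Semiring R] (i : T) (w : FreeCommMagma T) :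
    (peirce R i w).natDegree < ∑ t, count t w := by
  induction w using induction_on with
  | of j => simp [apply_ite]
  | mul u v hu hv =>
    have hX : (X : R[X]).natDegree ≤ 1 := natDegree_X_le
    have hmul := natDegree_mul_le (p := (X : R[X])) (q := peirce R i u + peirce R i v)
    have hadd := natDegree_add_le (peirce R i u) (peirce R i v)
    simp only [peirce_mul, count_mul, Finset.sum_add_distrib]
    omega

end FreeCommMagma

open FreeCommMagma

section Powers

variable {M : Type*} [Mul M]

@[simp] lemma ppow_zero (a : M) : ppow a 0 = a := rfl

@[simp] lemma ppow_succ (a : M) (k : ℕ) : ppow a (k + 1) = a * ppow a k := rfl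

@[simp] lemma lpow_zero (a g : M) : lpow a 0 g = g := rfl

@[simp] lemma lpow_succ (a g : M) (r : ℕ) : lpow a (r + 1) g = a * lpow a r g := rfl

end Powers

section Algebra

variable {K : Type*} [Field K] {T : Type*}

@[simp] lemma aug_single (w : FreeCommMagma T) (c : K) :
    aug K (MonoidAlgebra.single w c) = c := by
  simp [aug]

@[simp] lemma aug_mono (w : FreeCommMagma T) : aug K (mono K w) = 1 := aug_single w 1

lemma mono_mul_mono (u v : FreeCommMagma T) : mono K u * mono K v = mono K (u * v) := by
  simp [mono, MonoidAlgebra.single_mul_single]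

lemma aug_mul (f g : MonoidAlgebra K (FreeCommMagma T)) :
    aug K (f * g) = aug K f * aug K g := by
  induction f using MonoidAlgebra.induction_linear with
  | zero => simp
  | add f f' hf hf' => simp [add_mul, hf, hf']
  | single u a =>
    induction g using MonoidAlgebra.induction_linear with
    | zero => simp
    | add g g' hg hg' => simp [mul_add, hg, hg']
    | single v b => simp [MonoidAlgebra.single_mul_single]

variable [DecidableEq T]

@[simp] lemma Dp_single (i : T) (w : FreeCommMagma T) (c : K) :
    Dp K i (MonoidAlgebra.single w c) = c • peirce K i w := by
  simp [Dp]

@[simp] lemma Dp_mono (i : T) (w : FreeCommMagma T) : Dp K i (mono K w) = peirce K i w := by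
  simp [mono]

lemma Dp_mul (i : T) (f g : MonoidAlgebra K (FreeCommMagma T)) :
    Dp K i (f * g) = X * (aug K g • Dp K i f + aug K f • Dp K i g) := by
  induction f using MonoidAlgebra.induction_linear with
  | zero => simp
  | add f f' hf hf' => simp only [add_mul, map_add, hf, hf', smul_eq_C_mul]; ring
  | single u a =>
    induction g using MonoidAlgebra.induction_linear with
    | zero => simp
    | add g g' hg hg' => simp only [mul_add, map_add, hg, hg', smul_eq_C_mul]; ring
    | single v b =>
      simp only [MonoidAlgebra.single_mul_single, Dp_single, aug_single, peirce_mul,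
        smul_eq_C_mul, map_mul]
      ring

end Algebra

section PeirceData

variable (K : Type*) [Field K] {T : Type*} [DecidableEq T]

noncomputable def peirceData : MonoidAlgebra K (FreeCommMagma T) →ₗ[K] K × (T → K[X]) :=
  (aug K).prod (LinearMap.pi fun i => Dp K i)

variable {K}

lemma peirceData_apply (f : MonoidAlgebra K (FreeCommMagma T)) :
    peirceData K f = (aug K f, fun i => Dp K i f) := rfl

lemma peirceData_eq_iff {f g : MonoidAlgebra K (FreeCommMagma T)} :
    peirceData K f = peirceData K g ↔ aug K f = aug K g ∧ ∀ i, Dp K i f = Dp K i g := by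
  simp [peirceData_apply, funext_iff]

lemma aug_eq_one_of_peirceData_eq {P : MonoidAlgebra K (FreeCommMagma T)} {w : FreeCommMagma T}
    (h : peirceData K P = peirceData K (mono K w)) : aug K P = 1 :=
  (peirceData_eq_iff.1 h).1.trans (aug_mono w)

lemma peirceData_mul_congr {f f' g g' : MonoidAlgebra K (FreeCommMagma T)}
    (hf : peirceData K f = peirceData K f') (hg : peirceData K g = peirceData K g') :
    peirceData K (f * g) = peirceData K (f' * g') := by
  rw [peirceData_eq_iff] at hf hg ⊢
  refine ⟨by rw [aug_mul, aug_mul, hf.1, hg.1], fun i => ?_⟩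
  rw [Dp_mul, Dp_mul, hf.1, hg.1, hf.2, hg.2]

variable {f g h k : MonoidAlgebra K (FreeCommMagma T)}

lemma peirceData_mul_exchange (hf : aug K f = 1) (hg : aug K g = 1) (hh : aug K h = 1)
    (hk : aug K k = 1) :
    peirceData K (f * g) = peirceData K (f * h) + peirceData K (k * g) - peirceData K (k * h) := by
  simp only [peirceData_apply, Prod.mk_add_mk, Prod.mk_sub_mk, Prod.mk.injEq, aug_mul, Dp_mul,
    hf, hg, hh, hk, one_smul, mul_one, funext_iff, Pi.add_apply, Pi.sub_apply]
  exact ⟨by norm_num, fun i => by ring⟩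

lemma peirceData_mul_mul_reassoc (hf : aug K f = 1) (hg : aug K g = 1) (hh : aug K h = 1) :
    peirceData K (f * (g * h)) =
      peirceData K (f * g * h) - peirceData K (f * f * h) + peirceData K (f * (f * h)) := by
  simp only [peirceData_apply, Prod.mk_add_mk, Prod.mk_sub_mk, Prod.mk.injEq, aug_mul, Dp_mul,
    hf, hg, hh, one_smul, mul_one, funext_iff, Pi.add_apply, Pi.sub_apply]
  exact ⟨by norm_num, fun i => by ring⟩

end PeirceData

section TwoVariables

variable {K : Type*} [Field K]

@[simp] lemma peirce_zero_x2 : peirce K (0 : Fin 2) x2 = 1 := by simp [x2]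
@[simp] lemma peirce_one_x2 : peirce K (1 : Fin 2) x2 = 0 := by simp [x2]
@[simp] lemma peirce_zero_y2 : peirce K (0 : Fin 2) y2 = 0 := by simp [y2]
@[simp] lemma peirce_one_y2 : peirce K (1 : Fin 2) y2 = 1 := by simp [y2]
@[simp] lemma count_zero_x2 : count (0 : Fin 2) x2 = 1 := rfl
@[simp] lemma count_one_x2 : count (1 : Fin 2) x2 = 0 := rfl
@[simp] lemma count_zero_y2 : count (0 : Fin 2) y2 = 0 := rfl
@[simp] lemma count_one_y2 : count (1 : Fin 2) y2 = 1 := rfl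

@[simp] lemma count_zero_ppow (k : ℕ) : count (0 : Fin 2) (ppow x2 k) = k + 1 := by
  induction k with
  | zero => rfl
  | succ k ih => rw [ppow_succ, count_mul, ih, count_zero_x2, add_comm]

@[simp] lemma count_one_ppow (k : ℕ) : count (1 : Fin 2) (ppow x2 k) = 0 := by
  induction k with
  | zero => rfl
  | succ k ih => simp [ih]

@[simp] lemma count_zero_lpow (r : ℕ) : count (0 : Fin 2) (lpow x2 r y2) = r := by
  induction r with
  | zero => rfl
  | succ r ih => rw [lpow_succ, count_mul, ih, count_zero_x2, add_comm]

@[simp] lemma count_one_lpow (r : ℕ) : count (1 : Fin 2) (lpow x2 r y2) = 1 := by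
  induction r with
  | zero => rfl
  | succ r ih => simp [ih]

@[simp] lemma peirce_one_ppow (k : ℕ) : peirce K (1 : Fin 2) (ppow x2 k) = 0 := by
  induction k with
  | zero => simp
  | succ k ih => simp [ih]

@[simp] lemma peirce_one_lpow (r : ℕ) : peirce K (1 : Fin 2) (lpow x2 r y2) = X ^ r := by
  induction r with
  | zero => simp
  | succ r ih => simp [ih, pow_succ']

lemma coeff_peirce_zero_ppow_succ (k : ℕ) :
    (peirce K (0 : Fin 2) (ppow x2 (k + 1))).coeff (k + 1) = 2 := by
  induction k with
  | zero => norm_num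
  | succ k ih =>
    rw [ppow_succ, peirce_mul, coeff_X_mul, coeff_add, ih, peirce_zero_x2, coeff_one]
    simp

lemma coeff_peirce_zero_lpow_succ (r : ℕ) :
    (peirce K (0 : Fin 2) (lpow x2 (r + 1) y2)).coeff (r + 1) = 1 := by
  induction r with
  | zero => simp
  | succ r ih =>
    rw [lpow_succ, peirce_mul, coeff_X_mul, coeff_add, ih, peirce_zero_x2, coeff_one]
    simp

lemma eq_y2_of_count (u : FreeCommMagma (Fin 2)) (h0 : count 0 u = 0) (h1 : count 1 u = 1) :
    u = y2 := by
  induction u using induction_on with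
  | of j => fin_cases j <;> simp_all [y2]
  | mul u v _ _ =>
    have hu := sum_count_pos u
    have hv := sum_count_pos v
    simp only [Fin.sum_univ_two, count_mul] at *
    omega

end TwoVariables

section TrainSpan

variable {K : Type*} [Field K]

lemma ppow_mul_y2_mem_trainSpan1 {k n : ℕ} (hk : 1 ≤ k) (hkn : k < n) :
    mono K (ppow x2 k * y2) ∈ trainSpan1 K n :=
  Submodule.subset_span (Or.inl ⟨k, ⟨hk, by omega⟩, rfl⟩)

lemma lpow_mem_trainSpan1 {r n : ℕ} (hr : 1 ≤ r) (hrn : r ≤ n) :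
    mono K (lpow x2 r y2) ∈ trainSpan1 K n :=
  Submodule.subset_span (Or.inr ⟨r, ⟨hr, hrn⟩, rfl⟩)

lemma trainSpan1_mono {m n : ℕ} (h : m ≤ n) : trainSpan1 K m ≤ trainSpan1 K n := by
  refine Submodule.span_mono (Set.union_subset_union ?_ ?_) <;>
    exact Set.image_mono (Set.Icc_subset_Icc le_rfl (by omega))

lemma trainSpan1_succ_le (n : ℕ) :
    trainSpan1 K (n + 1) ≤ trainSpan1 K n ⊔
      Submodule.span K {mono K (ppow x2 n * y2), mono K (lpow x2 (n + 1) y2)} := by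
  refine Submodule.span_le.2 ?_
  rintro _ (⟨k, ⟨hk, hkn⟩, rfl⟩ | ⟨r, ⟨hr, hrn⟩, rfl⟩)
  · rcases (show k < n ∨ k = n by omega) with hlt | rfl
    · exact Submodule.mem_sup_left (ppow_mul_y2_mem_trainSpan1 hk hlt)
    · exact Submodule.mem_sup_right (Submodule.subset_span (by simp))
  · rcases (show r ≤ n ∨ r = n + 1 by omega) with hle | rfl
    · exact Submodule.mem_sup_left (lpow_mem_trainSpan1 hr hle)
    · exact Submodule.mem_sup_right (Submodule.subset_span (by simp))

lemma mono_mem_trainSpan1_iff {n : ℕ} {w : FreeCommMagma (Fin 2)} :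
    mono K w ∈ trainSpan1 K n ↔
      w ∈ (fun k => ppow x2 k * y2) '' Set.Icc 1 (n - 1) ∪
        (fun r => lpow x2 r y2) '' Set.Icc 1 n := by
  rw [trainSpan1, ← Set.image_image (mono K) (fun k => ppow x2 k * y2),
    ← Set.image_image (mono K) (fun r => lpow x2 r y2), ← Set.image_union]
  exact MonoidAlgebra.single_mem_span_single

lemma mono_not_mem_trainSpan1 {n : ℕ} {w : FreeCommMagma (Fin 2)} (hw : count 0 w = n)
    (hne : w ≠ ppow x2 (n - 1) * y2) (hne' : w ≠ lpow x2 n y2) : mono K w ∉ trainSpan1 K n := by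
  rw [mono_mem_trainSpan1_iff]
  rintro (⟨k, -, rfl⟩ | ⟨r, -, rfl⟩)
  · rw [count_mul, count_zero_ppow, count_zero_y2] at hw
    exact hne (by rw [← hw]; rfl)
  · rw [count_zero_lpow] at hw
    exact hne' (by rw [hw])

lemma degree_Dp_le_of_mem_trainSpan1 (i : Fin 2) {n : ℕ}
    {D : MonoidAlgebra K (FreeCommMagma (Fin 2))} (hD : D ∈ trainSpan1 K n) :
    (Dp K i D).degree ≤ n := by
  suffices trainSpan1 K n ≤ (degreeLE K n).comap (Dp K i) from mem_degreeLE.1 (this hD)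
  refine Submodule.span_le.2 ?_
  rintro _ (⟨k, ⟨hk, hkn⟩, rfl⟩ | ⟨r, ⟨-, hrn⟩, rfl⟩) <;>
    refine mem_degreeLE.2 (degree_le_of_natDegree_le ?_) <;>
    rw [Dp_mono]
  · have := natDegree_peirce_lt K i (ppow x2 k * y2)
    simp only [Fin.sum_univ_two, count_mul, count_zero_ppow, count_one_ppow, count_zero_y2,
      count_one_y2] at this
    omega
  · have := natDegree_peirce_lt K i (lpow x2 r y2)
    simp only [Fin.sum_univ_two, count_zero_lpow, count_one_lpow] at this
    omega

theorem eq_zero_of_mem_trainSpan1 (hchar : (2 : K) ≠ 0) :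
    ∀ {n : ℕ} {D : MonoidAlgebra K (FreeCommMagma (Fin 2))}, D ∈ trainSpan1 K n →
      (∀ i, Dp K i D = 0) → D = 0
  | 0, D, hD, _ => by simpa [trainSpan1] using hD
  | 1, D, hD, hDp => by
    have h1 : trainSpan1 K 1 = K ∙ mono K (x2 * y2) := by simp [trainSpan1]
    obtain ⟨c, rfl⟩ := Submodule.mem_span_singleton.1 (h1 ▸ hD)
    have hc : c = 0 := by simpa using congrArg (coeff · 1) (hDp 1)
    rw [hc, zero_smul]
  | n + 2, D, hD, hDp => by
    obtain ⟨D', hD', _, hpair, rfl⟩ := Submodule.mem_sup.1 (trainSpan1_succ_le (n + 1) hD)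
    obtain ⟨β, γ, rfl⟩ := Submodule.mem_span_pair.1 hpair
    have hD'top : ∀ i, (Dp K i D').coeff (n + 2) = 0 := fun i =>
      coeff_eq_zero_of_degree_lt ((degree_Dp_le_of_mem_trainSpan1 i hD').trans_lt
        (by exact_mod_cast Nat.lt_succ_self _))
    have hγ : γ = 0 := by
      simpa [hD'top, coeff_X] using congrArg (coeff · (n + 2)) (hDp 1)
    have hβ : 2 * β = 0 := by
      simpa [-ppow_succ, hD'top, hγ, coeff_X_mul, coeff_peirce_zero_ppow_succ, mul_comm]
        using congrArg (coeff · (n + 2)) (hDp 0)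
    obtain rfl : β = 0 := (mul_eq_zero.1 hβ).resolve_left hchar
    subst hγ
    simpa using eq_zero_of_mem_trainSpan1 hchar hD' (by simpa using hDp)

theorem train_peirce_evanescent_two_one_eq_zero (hchar : (2 : K) ≠ 0) (a b c d : K)
    (h : ∀ i : Fin 2, Dp K i (a • mono K y2 + b • mono K (x2 * y2)
      + c • mono K (ppow x2 1 * y2) + d • mono K (lpow x2 2 y2)) = 0) :
    a • mono K y2 + b • mono K (x2 * y2)
      + c • mono K (ppow x2 1 * y2) + d • mono K (lpow x2 2 y2) = 0 := by
  obtain rfl : a = 0 := by simpa using congrArg (coeff · 0) (h 1)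
  rw [zero_smul, zero_add] at h ⊢
  refine eq_zero_of_mem_trainSpan1 hchar (n := 2) ?_ h
  refine add_mem (add_mem ?_ ?_) ?_ <;> refine Submodule.smul_mem _ _ ?_
  · exact lpow_mem_trainSpan1 (r := 1) le_rfl (by omega)
  · exact ppow_mul_y2_mem_trainSpan1 le_rfl (by omega)
  · exact lpow_mem_trainSpan1 (by omega) le_rfl

/-- The span of `x, x², …, xᶜ` (recall `ppow x2 j = x^(j+1)`). -/
noncomputable def principalSpan (K : Type*) [Field K] (c : ℕ) :
    Submodule K (MonoidAlgebra K (FreeCommMagma (Fin 2))) :=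
  Submodule.span K ((fun j => mono K (ppow x2 j)) '' Set.Iio c)

lemma principalSpan_mono {c d : ℕ} (h : c ≤ d) : principalSpan K c ≤ principalSpan K d :=
  Submodule.span_mono (Set.image_mono (Set.Iio_subset_Iio h))

lemma mono_x2_mul_mem_principalSpan {c : ℕ} {Q : MonoidAlgebra K (FreeCommMagma (Fin 2))}
    (hQ : Q ∈ principalSpan K c) : mono K x2 * Q ∈ principalSpan K (c + 1) := by
  suffices principalSpan K c ≤ (principalSpan K (c + 1)).comap (LinearMap.mulLeft K (mono K x2))
    from this hQ
  refine Submodule.span_le.2 ?_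
  rintro _ ⟨j, hj, rfl⟩
  refine Submodule.subset_span ⟨j + 1, by simpa using hj, ?_⟩
  simp [mono_mul_mono]

lemma mono_y2_mul_mem_trainSpan1 {c : ℕ} {Q : MonoidAlgebra K (FreeCommMagma (Fin 2))}
    (hQ : Q ∈ principalSpan K c) : mono K y2 * Q ∈ trainSpan1 K c := by
  suffices principalSpan K c ≤ (trainSpan1 K c).comap (LinearMap.mulLeft K (mono K y2))
    from this hQ
  refine Submodule.span_le.2 ?_
  rintro _ ⟨j, hj, rfl⟩
  rw [Set.mem_Iio] at hj
  simp only [SetLike.mem_coe, Submodule.mem_comap, LinearMap.mulLeft_apply, mono_mul_mono,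
    mul_comm y2]
  rcases Nat.eq_zero_or_pos j with rfl | hj0
  · exact lpow_mem_trainSpan1 le_rfl hj
  · exact ppow_mul_y2_mem_trainSpan1 hj0 hj

lemma exists_principalSpan_peirceData_eq (v : FreeCommMagma (Fin 2)) (hv : count 1 v = 0) :
    ∃ Q ∈ principalSpan K (count 0 v), peirceData K Q = peirceData K (mono K v) := by
  induction v using induction_on with
  | of j =>
    fin_cases j
    · exact ⟨mono K x2, Submodule.subset_span ⟨0, by simp, rfl⟩, rfl⟩
    · simp at hv
  | mul s t ihs iht =>
    rw [count_mul, Nat.add_eq_zero_iff] at hv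
    obtain ⟨Qs, hQs, hQss⟩ := ihs hv.1
    obtain ⟨Qt, hQt, hQtt⟩ := iht hv.2
    have hs := sum_count_pos s
    have ht := sum_count_pos t
    simp only [Fin.sum_univ_two, hv.1, hv.2] at hs ht
    refine ⟨mono K x2 * Qs + mono K x2 * Qt - mono K x2 * mono K x2, ?_, ?_⟩
    · rw [count_mul]
      refine sub_mem (add_mem ?_ ?_) ?_
      · exact principalSpan_mono (by omega) (mono_x2_mul_mem_principalSpan hQs)
      · exact principalSpan_mono (by omega) (mono_x2_mul_mem_principalSpan hQt)
      · exact Submodule.subset_span ⟨1, by simp; omega, (mono_mul_mono _ _).symm⟩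
    · rw [← mono_mul_mono, peirceData_mul_congr hQss.symm hQtt.symm,
        peirceData_mul_exchange (aug_eq_one_of_peirceData_eq hQss)
          (aug_eq_one_of_peirceData_eq hQtt) (aug_mono x2) (aug_mono x2),
        fca_mul_comm K Qs, map_sub, map_add]

lemma exists_trainSpan1_peirceData_eq_mono_x2_mul {m : ℕ}
    {P : MonoidAlgebra K (FreeCommMagma (Fin 2))} (hP : P ∈ trainSpan1 K m) :
    ∃ P' ∈ trainSpan1 K (m + 1), peirceData K P' = peirceData K (mono K x2 * P) := by
  suffices trainSpan1 K m ≤ (trainSpan1 K (m + 1) ⊔ LinearMap.ker (peirceData K)).comap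
      (LinearMap.mulLeft K (mono K x2)) by
    obtain ⟨P', hP', z, hz, hsum⟩ := Submodule.mem_sup.1 (this hP)
    refine ⟨P', hP', ?_⟩
    rw [← LinearMap.mulLeft_apply K, ← hsum, map_add, LinearMap.mem_ker.1 hz, add_zero]
  refine Submodule.span_le.2 ?_
  rintro _ (⟨k, ⟨hk, hkm⟩, rfl⟩ | ⟨r, ⟨hr, hrm⟩, rfl⟩)
  · set P' := mono K (ppow x2 (k + 1) * y2) - mono K (ppow x2 1 * y2) + mono K (lpow x2 2 y2)
    refine Submodule.mem_sup.2 ⟨P', ?_, mono K x2 * mono K (ppow x2 k * y2) - P', ?_,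
      add_sub_cancel P' _⟩
    · refine add_mem (sub_mem ?_ ?_) ?_
      · exact ppow_mul_y2_mem_trainSpan1 (by omega) (by omega)
      · exact ppow_mul_y2_mem_trainSpan1 le_rfl (by omega)
      · exact lpow_mem_trainSpan1 (by omega) (by omega)
    · rw [LinearMap.mem_ker, map_sub, sub_eq_zero, ← mono_mul_mono (ppow x2 k),
        peirceData_mul_mul_reassoc (aug_mono _) (aug_mono _) (aug_mono _)]
      simp only [P', map_add, map_sub, mono_mul_mono]
      rfl
  · refine Submodule.mem_sup_left ?_
    change mono K x2 * mono K (lpow x2 r y2) ∈ trainSpan1 K (m + 1)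
    rw [mono_mul_mono]
    exact lpow_mem_trainSpan1 (r := r + 1) (by omega) (by omega)

lemma exists_trainSpan1_peirceData_eq_mul {u v : FreeCommMagma (Fin 2)}
    (hu : count 1 u = 1) (hv : count 1 v = 0)
    (ih : 1 ≤ count 0 u →
      ∃ P ∈ trainSpan1 K (count 0 u), peirceData K P = peirceData K (mono K u)) :
    ∃ P ∈ trainSpan1 K (count 0 (u * v)), peirceData K P = peirceData K (mono K (u * v)) := by
  obtain ⟨Q, hQ, hQv⟩ := exists_principalSpan_peirceData_eq (K := K) v hv
  have hv0 : 0 < count 0 v := by simpa [Fin.sum_univ_two, hv] using sum_count_pos v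
  rcases Nat.eq_zero_or_pos (count 0 u) with hu0 | hu0
  · obtain rfl := eq_y2_of_count u hu0 hu
    refine ⟨mono K y2 * Q, by simpa using mono_y2_mul_mem_trainSpan1 hQ, ?_⟩
    rw [← mono_mul_mono]
    exact peirceData_mul_congr rfl hQv
  obtain ⟨Pu, hPu, hPuu⟩ := ih hu0
  obtain ⟨P', hP', hP'x⟩ := exists_trainSpan1_peirceData_eq_mono_x2_mul hPu
  refine ⟨P' + mono K y2 * Q - mono K (lpow x2 1 y2), ?_, ?_⟩
  · rw [count_mul]
    refine sub_mem (add_mem ?_ ?_) (lpow_mem_trainSpan1 le_rfl (by omega))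
    · exact trainSpan1_mono (by omega) hP'
    · exact trainSpan1_mono (by omega) (mono_y2_mul_mem_trainSpan1 hQ)
  · rw [← mono_mul_mono, ← peirceData_mul_congr hPuu hQv,
      peirceData_mul_exchange (aug_eq_one_of_peirceData_eq hPuu)
        (aug_eq_one_of_peirceData_eq hQv) (aug_mono x2) (aug_mono y2),
      fca_mul_comm K Pu, ← hP'x, mono_mul_mono, mul_comm y2, map_sub, map_add]
    rfl

theorem exists_trainSpan1_peirceData_eq (w : FreeCommMagma (Fin 2)) (h1 : count 1 w = 1)
    (h0 : 1 ≤ count 0 w) :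
    ∃ P ∈ trainSpan1 K (count 0 w), peirceData K P = peirceData K (mono K w) := by
  induction w using induction_on with
  | of j => fin_cases j <;> simp at h0 h1
  | mul s t ihs iht =>
    rw [count_mul] at h1
    rcases (show count 1 s = 1 ∧ count 1 t = 0 ∨ count 1 t = 1 ∧ count 1 s = 0 by omega)
      with ⟨hs, ht⟩ | ⟨ht, hs⟩
    · exact exists_trainSpan1_peirceData_eq_mul hs ht (ihs hs)
    · rw [mul_comm s]
      exact exists_trainSpan1_peirceData_eq_mul ht hs (iht ht)

end TrainSpan

end Evanescent

open Evanescent in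
/-- (i) There is no train Peirce-evanescent identity of degree `(2,1)`;
(ii) for `n ≥ 3` and every monomial `w` of bidegree `(n,1)` other than `xⁿ·y` and
`x^{{n}}y` there is a unique `P_w` in the span of
`{x^k·y : 2 ≤ k ≤ n} ∪ {x^{{r}}y : 1 ≤ r ≤ n}` with `ε(P_w) = 1` and
`∂ₓ(w − P_w) = ∂_y(w − P_w) = 0`; consequently `w − P_w` is a Peirce-evanescent
identity. -/
theorem train_identities_bidegree_n_one
    {K : Type*} [Field K] (hchar : (2 : K) ≠ 0) :
    (∀ a b c d : K,
      (∀ i : Fin 2, Dp K i (a • mono K y2 + b • mono K (x2 * y2)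
        + c • mono K (ppow x2 1 * y2) + d • mono K (lpow x2 2 y2)) = 0) →
      a • mono K y2 + b • mono K (x2 * y2)
        + c • mono K (ppow x2 1 * y2) + d • mono K (lpow x2 2 y2) = 0) ∧
    (∀ n : ℕ, 3 ≤ n → ∀ w : FreeCommMagma (Fin 2),
      FreeCommMagma.count 0 w = n → FreeCommMagma.count 1 w = 1 →
      w ≠ ppow x2 (n - 1) * y2 → w ≠ lpow x2 n y2 →
      (∃! P : MonoidAlgebra K (FreeCommMagma (Fin 2)),
        P ∈ trainSpan1 K n ∧ aug K P = 1 ∧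
        ∀ i : Fin 2, Dp K i (mono K w - P) = 0) ∧
      (∀ P : MonoidAlgebra K (FreeCommMagma (Fin 2)),
        P ∈ trainSpan1 K n → aug K P = 1 →
        (∀ i : Fin 2, Dp K i (mono K w - P) = 0) →
        mono K w - P ≠ 0 ∧ aug K (mono K w - P) = 0)) := by
  refine ⟨train_peirce_evanescent_two_one_eq_zero hchar, fun n hn w hw0 hw1 hne hne' => ?_⟩
  have hdata : ∀ P, (aug K P = 1 ∧ ∀ i, Dp K i (mono K w - P) = 0) ↔
      peirceData K P = peirceData K (mono K w) := fun P => by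
    simp_rw [peirceData_eq_iff, aug_mono, map_sub, sub_eq_zero, eq_comm (a := Dp K _ (mono K w))]
  obtain ⟨P, hP, hPw⟩ := exists_trainSpan1_peirceData_eq (K := K) w hw1 (by omega)
  rw [hw0] at hP
  refine ⟨⟨P, ⟨hP, (hdata P).2 hPw⟩, fun Q ⟨hQ, hQw⟩ => ?_⟩,
    fun Q hQ haug _ => ⟨fun h => ?_, by rw [map_sub, aug_mono, haug, sub_self]⟩⟩
  · have hQP := peirceData_eq_iff.1 (((hdata Q).1 hQw).trans hPw.symm)
    refine sub_eq_zero.1 (eq_zero_of_mem_trainSpan1 hchar (sub_mem hQ hP) fun i => ?_)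
    rw [map_sub, hQP.2 i, sub_self]
  · exact mono_not_mem_trainSpan1 hw0 hne hne' (sub_eq_zero.1 h ▸ hQ)
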